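/- Suppose X' → X, Y' → Y are proper maps over S with product map h : X'×_S Y' → X×_S Y. In any bivariant theory where external product is defined by α ⊠ β = a^*(β) ∘ α and where proper pushforward satisfies the projection formula and base change, external product commutes with proper pushforward: h_*(α ⊠ β) = f_*(α) ⊠ g_*(β) for α ∈ H^BM(X'→S), β ∈ H^BM(Y'→S). -/

import Mathlib

theorem bivariant_external_product_pushforward_general
    {ι : Type*} (H : ι → ι → Type*)
    (prod : ∀ {A B C : ι}, H A B → H B C → H A C)
    (X' X Y' Y S P' P Q : ι)   -- P' = X'×_S Y', P = X×_S Y, Q = X'×_S Y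
    -- base-change pullbacks defining external products
    (pullP' : H Y' S → H P' X')   -- pullback along the square over a' : X' → S
    (pullP  : H Y S → H P X)      -- pullback along the square over a : X → S
    (pullQ  : H Y S → H Q X')     -- pullback along the square over a' : X' → S
    -- proper pushforwards
    (fpush : H X' S → H X S)      -- f_*
    (gpush : H Y' S → H Y S)      -- g_*
    (hpush : H P' S → H P S)      -- h_*
    (pushP'Q : H P' S → H Q S) (pushQP : H Q S → H P S)
    (push21 : H P' X' → H Q X')   -- pushforward of bivariant classes along P' → Q
    -- h factors through Q
    (hfact : ∀ x : H P' S, hpush x = pushQP (pushP'Q x))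
    -- base change: pushing a pulled-back class equals pulling the pushed class
    (hbc : ∀ β : H Y' S, push21 (pullP' β) = pullQ (gpush β))
    -- pushforward is compatible with the composition product
    (hpushprod : ∀ (ξ : H P' X') (α : H X' S),
      pushP'Q (prod ξ α) = prod (push21 ξ) α)
    -- projection formula `p_*(q^*(γ) ∘ α) = γ ∘ p_*(α)` for the square Q → P
    (hproj : ∀ (δ : H Y S) (α : H X' S),
      pushQP (prod (pullQ δ) α) = prod (pullP δ) (fpush α)) :
    -- h_*(α ⊠ β) = f_*(α) ⊠ g_*(β)
    ∀ (α : H X' S) (β : H Y' S),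
      hpush (prod (pullP' β) α) = prod (pullP (gpush β)) (fpush α) := by
  intro α β
  calc hpush (prod (pullP' β) α)
      = pushQP (pushP'Q (prod (pullP' β) α)) := hfact _
    _ = pushQP (prod (push21 (pullP' β)) α) := by rw [hpushprod]
    _ = pushQP (prod (pullQ (gpush β)) α) := by rw [hbc]
    _ = prod (pullP (gpush β)) (fpush α) := hproj _ _

theorem bivariant_external_product_pushforward
    {ι : Type*} (H : ι → ι → Type*) [∀ A B, AddCommGroup (H A B)]
    (prod : ∀ {A B C : ι}, H A B → H B C → H A C)
    (X' X Y' Y S P' P Q : ι)   -- P' = X'×_S Y', P = X×_S Y, Q = X'×_S Y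
    -- base-change pullbacks defining external products
    (pullP' : H Y' S → H P' X')   -- pullback along the square over a' : X' → S
    (pullP  : H Y S → H P X)      -- pullback along the square over a : X → S
    (pullQ  : H Y S → H Q X')     -- pullback along the square over a' : X' → S
    -- proper pushforwards
    (fpush : H X' S → H X S)      -- f_*
    (gpush : H Y' S → H Y S)      -- g_*
    (hpush : H P' S → H P S)      -- h_*
    (pushP'Q : H P' S → H Q S) (pushQP : H Q S → H P S)
    (push21 : H P' X' → H Q X')   -- pushforward of bivariant classes along P' → Q
    -- h factors through Q
    (hfact : ∀ x : H P' S, hpush x = pushQP (pushP'Q x))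
    -- base change: pushing a pulled-back class equals pulling the pushed class
    (hbc : ∀ β : H Y' S, push21 (pullP' β) = pullQ (gpush β))
    -- pushforward is compatible with the composition product
    (hpushprod : ∀ (ξ : H P' X') (α : H X' S),
      pushP'Q (prod ξ α) = prod (push21 ξ) α)
    -- projection formula `p_*(q^*(γ) ∘ α) = γ ∘ p_*(α)` for the square Q → P
    (hproj : ∀ (δ : H Y S) (α : H X' S),
      pushQP (prod (pullQ δ) α) = prod (pullP δ) (fpush α)) :
    -- h_*(α ⊠ β) = f_*(α) ⊠ g_*(β)
    ∀ (α : H X' S) (β : H Y' S),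
      hpush (prod (pullP' β) α) = prod (pullP (gpush β)) (fpush α) :=
  bivariant_external_product_pushforward_general H prod X' X Y' Y S P' P Q pullP' pullP pullQ fpush
    gpush hpush pushP'Q pushQP push21 hfact hbc hpushprod hproj
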